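/- Suppose nonnegative reals $a_\upsilon$, $\upsilon = 0,\dots,V-1$, satisfy $a_\upsilon \le 4\beta^2 c^2 \upsilon \sum_{s=0}^{\upsilon-1} a_s + 4\beta^2 c^2 \upsilon^2 B + 2\beta^2 \upsilon^2 q^2$ for each $\upsilon$, where $\beta, c, B, q \ge 0$ and $2\beta^2 c^2 V(V-1) < 1$. Then $\frac{1}{V}\sum_{\upsilon=0}^{V-1} a_\upsilon \le \frac{2\beta^2 c^2 (V-1)(2V-1)}{3(1 - 2\beta^2 c^2 V(V-1))} B + \frac{\beta^2 q^2 (V-1)(2V-1)}{3(1 - 2\beta^2 c^2 V(V-1))}$. -/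

import Mathlib

open Finset

/-
Summing the recursion over `υ < V` and bounding every partial sum `∑_{s<υ} a_s` by the full sum
`S = ∑_{υ<V} a_υ` (the `a_υ` are nonnegative) gives, with `∑ υ = V(V-1)/2` and
`∑ υ² = (V-1)V(2V-1)/6`, the self-referential bound
`S ≤ 2β²c² V(V-1) S + (4β²c²B + 2β²q²) (V-1)V(2V-1)/6`.
Since `2β²c² V(V-1) < 1`, the `S` on the right can be absorbed; dividing by `V` gives the claim.
-/

theorem sum_range_natCast_real (n : ℕ) : ∑ υ ∈ range n, (υ : ℝ) = n * (n - 1) / 2 := by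
  induction n with
  | zero => simp
  | succ k ih => rw [sum_range_succ, ih]; push_cast; ring

theorem sum_range_natCast_sq_real (n : ℕ) :
    ∑ υ ∈ range n, (υ : ℝ) ^ 2 = n * (n - 1) * (2 * n - 1) / 6 := by
  induction n with
  | zero => simp
  | succ k ih => rw [sum_range_succ, ih]; push_cast; ring

theorem sum_range_le_of_le_mul_sum_range {a : ℕ → ℝ} {V : ℕ} {K D : ℝ} (hK : 0 ≤ K)
    (ha : ∀ υ < V, 0 ≤ a υ)
    (hrec : ∀ υ < V, a υ ≤ K * υ * ∑ s ∈ range υ, a s + D * (υ : ℝ) ^ 2) :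
    ∑ υ ∈ range V, a υ ≤
      K * (V * (V - 1) / 2) * ∑ υ ∈ range V, a υ + D * (V * (V - 1) * (2 * V - 1) / 6) := by
  set S := ∑ υ ∈ range V, a υ
  have partial_le : ∀ υ < V, ∑ s ∈ range υ, a s ≤ S := fun υ hυ =>
    sum_le_sum_of_subset_of_nonneg (range_subset_range.mpr hυ.le)
      fun i hi _ => ha i (mem_range.mp hi)
  calc S ≤ ∑ υ ∈ range V, (K * S * υ + D * (υ : ℝ) ^ 2) := by
        refine sum_le_sum fun υ hυ => (hrec υ (mem_range.mp hυ)).trans ?_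
        have := mul_le_mul_of_nonneg_left (partial_le υ (mem_range.mp hυ))
          (mul_nonneg hK υ.cast_nonneg)
        linarith
    _ = K * (V * (V - 1) / 2) * S + D * (V * (V - 1) * (2 * V - 1) / 6) := by
        rw [sum_add_distrib, ← mul_sum, ← mul_sum, sum_range_natCast_real,
          sum_range_natCast_sq_real]
        ring

theorem stmt_13_general (V : ℕ) (hV : 1 ≤ V) (a : ℕ → ℝ) (β c B q : ℝ)
    (ha : ∀ υ < V, 0 ≤ a υ)
    (hsmall : 2 * β ^ 2 * c ^ 2 * V * (V - 1) < 1)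
    (hrec : ∀ υ < V, a υ ≤ 4 * β ^ 2 * c ^ 2 * υ * ∑ s ∈ range υ, a s
        + 4 * β ^ 2 * c ^ 2 * (υ : ℝ) ^ 2 * B + 2 * β ^ 2 * (υ : ℝ) ^ 2 * q ^ 2) :
    (V : ℝ)⁻¹ * ∑ υ ∈ range V, a υ ≤
      2 * β ^ 2 * c ^ 2 * ((V : ℝ) - 1) * (2 * V - 1)
        / (3 * (1 - 2 * β ^ 2 * c ^ 2 * V * (V - 1))) * B
      + β ^ 2 * q ^ 2 * ((V : ℝ) - 1) * (2 * V - 1)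
        / (3 * (1 - 2 * β ^ 2 * c ^ 2 * V * (V - 1))) := by
  have hsum := sum_range_le_of_le_mul_sum_range (K := 4 * β ^ 2 * c ^ 2)
    (D := 4 * β ^ 2 * c ^ 2 * B + 2 * β ^ 2 * q ^ 2) (by positivity) ha
    fun υ hυ => (hrec υ hυ).trans_eq (by ring)
  have hVpos : (0 : ℝ) < V := by exact_mod_cast hV
  have hden : 0 < 3 * (1 - 2 * β ^ 2 * c ^ 2 * V * (V - 1)) := by linarith
  rw [inv_mul_eq_div, div_mul_eq_mul_div, ← add_div, div_le_div_iff₀ hVpos hden]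
  linear_combination 3 * hsum

theorem stmt_13 (V : ℕ) (hV : 1 ≤ V) (a : ℕ → ℝ) (β c B q : ℝ)
    (hβ : 0 ≤ β) (hc : 0 ≤ c) (hB : 0 ≤ B) (hq : 0 ≤ q)
    (ha : ∀ υ < V, 0 ≤ a υ)
    (hsmall : 2 * β ^ 2 * c ^ 2 * V * (V - 1) < 1)
    (hrec : ∀ υ < V, a υ ≤ 4 * β ^ 2 * c ^ 2 * υ * ∑ s ∈ range υ, a s
        + 4 * β ^ 2 * c ^ 2 * (υ : ℝ) ^ 2 * B + 2 * β ^ 2 * (υ : ℝ) ^ 2 * q ^ 2) :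
    (V : ℝ)⁻¹ * ∑ υ ∈ range V, a υ ≤
      2 * β ^ 2 * c ^ 2 * ((V : ℝ) - 1) * (2 * V - 1)
        / (3 * (1 - 2 * β ^ 2 * c ^ 2 * V * (V - 1))) * B
      + β ^ 2 * q ^ 2 * ((V : ℝ) - 1) * (2 * V - 1)
        / (3 * (1 - 2 * β ^ 2 * c ^ 2 * V * (V - 1))) :=
  stmt_13_general V hV a β c B q ha hsmall hrec
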